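/- If V is a finite-dimensional 𝔤-module, then the weight multiplicities of V are invariant under the Weyl group: mult_V(wμ) = mult_V(μ) for all w ∈ W and all μ ∈ 𝔥*. -/

import Mathlib

/- Setting: `L` is a finite-dimensional semisimple Lie algebra over an algebraically
closed field `k` of characteristic zero (semisimplicity is expressed by the
characteristic-zero-equivalent Mathlib typeclass `LieAlgebra.IsKilling`, nondegeneracy
of the Killing form), with a splitting Cartan subalgebra `H`.  Weights live in
`𝔥* = Module.Dual k H`. -/

open LieAlgebra LieModule
open scoped Classical

noncomputable section

variable (k : Type) [Field k] [IsAlgClosed k] [CharZero k]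
variable (L : Type) [LieRing L] [LieAlgebra k L] [FiniteDimensional k L]
  [LieAlgebra.IsKilling k L]
variable (H : LieSubalgebra k L) [H.IsCartanSubalgebra]
variable (M : Type) [AddCommGroup M] [Module k M] [LieRingModule L M] [LieModule k L M]

/-- The weight space `M_χ = {m | ⁅h, m⁆ = χ(h) • m for all h ∈ H}` of the `L`-module
`M`, for an arbitrary linear functional `χ ∈ 𝔥*`. -/
def wtSpace (χ : Module.Dual k H) : Submodule k M where
  carrier := {m | ∀ h : H, ⁅(h : L), m⁆ = χ h • m}
  add_mem' := by
    intro a b ha hb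
    intro h
    rw [lie_add, ha h, hb h, smul_add]
  zero_mem' := by
    intro h
    rw [lie_zero, smul_zero]
  smul_mem' := by
    intro c m hm
    intro h
    rw [lie_smul, hm h, smul_comm]

/-- the multiplicity `mult_M(χ)` of the weight `χ` in `M` -/
def multW (χ : Module.Dual k H) : ℕ := Module.finrank k (wtSpace k L H M χ)

/-- The Weyl group of `(L, H)`: the subgroup of linear automorphisms of `𝔥*` generated
by the reflections `μ ↦ μ - μ(α^∨) α` in the (nonzero) roots `α` of `L` w.r.t. `H`. -/
def lieWeyl : Subgroup ((Module.Dual k H) ≃ₗ[k] (Module.Dual k H)) :=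
  Subgroup.closure {g | ∃ α : Weight k H L, α.IsNonZero ∧
    ∀ μ : Module.Dual k H,
      g μ = μ - μ (IsKilling.coroot α) • (α : Module.Dual k H)}

/-- the Weyl vector `ρ`: half the sum of the positive roots `Rp` -/
def rhoW (Rp : Finset (Weight k H L)) : Module.Dual k H :=
  (2 : k)⁻¹ • ∑ α ∈ Rp, (α : Module.Dual k H)

/-- the formal exponential `e^μ` in the group ring -/
def expoL (μ : Module.Dual k H) : AddMonoidAlgebra ℤ (Module.Dual k H) :=
  AddMonoidAlgebra.single μ 1

/-- the formal character `ch_M = ∑_μ mult_M(μ) e^μ` of `M` -/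
def chL : AddMonoidAlgebra ℤ (Module.Dual k H) :=
  ∑ᶠ μ : Module.Dual k H, (multW k L H M μ : ℤ) • expoL k L H μ

/-!
For a root `α`, choose an `sl₂`-triple `(c, e, f)` with `c` the coroot of `α`. Since `e` and `f`
act nilpotently on `M`, the endomorphism `θ = exp e · exp (-f) · exp e` of `M` is invertible, and
a computation with the three conjugations shows `θ ∘ h = (h - α(h) c) ∘ θ` on `M` for `h ∈ 𝔥`.
So `θ` embeds the weight space of `μ` into that of `s_α μ = μ - μ(c) α`, whence
`mult(μ) ≤ mult(s_α μ)`; as `s_α` is an involution this is an equality, and the reflections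
generate the Weyl group.
-/

namespace IsNilpotent

attribute [local instance] LieRing.ofAssociativeRing

variable {A : Type*} [Ring A] [Algebra ℚ A]

theorem exp_mulLeft {a : A} (ha : IsNilpotent a) :
    exp (LinearMap.mulLeft ℚ a) = LinearMap.mulLeft ℚ (exp a) :=
  (map_exp ha (Algebra.lmul ℚ A)).symm

theorem exp_mulRight {a : A} (ha : IsNilpotent a) :
    exp (LinearMap.mulRight ℚ a) = LinearMap.mulRight ℚ (exp a) := by
  obtain ⟨n, hn⟩ := ha
  have hRn : LinearMap.mulRight ℚ a ^ n = 0 := by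
    rw [LinearMap.pow_mulRight, hn, LinearMap.mulRight_zero_eq_zero]
  ext c
  simp [exp_eq_sum hn, exp_eq_sum hRn, LinearMap.pow_mulRight, Finset.mul_sum,
    LinearMap.sum_apply]

theorem exp_mul_mul_exp_neg {a : A} (ha : IsNilpotent a) (b : A) :
    exp a * b * exp (-a) = exp (LieAlgebra.ad ℚ A a) b := by
  have hL := (LinearMap.isNilpotent_mulLeft_iff ℚ a).mpr ha
  have hR := (LinearMap.isNilpotent_mulRight_iff ℚ (-a)).mpr ha.neg
  have hmulRight_neg : LinearMap.mulRight ℚ (-a) = -LinearMap.mulRight ℚ a := by ext; simp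
  rw [LieAlgebra.ad_eq_lmul_left_sub_lmul_right, Pi.sub_apply, sub_eq_add_neg, ← hmulRight_neg,
    exp_add_of_commute (LinearMap.commute_mulLeft_right a (-a)) hL hR, exp_mulLeft ha,
    exp_mulRight ha.neg]
  simp [mul_assoc]

theorem exp_mul_eq_exp_ad_mul {a : A} (ha : IsNilpotent a) (b : A) :
    exp a * b = exp (LieAlgebra.ad ℚ A a) b * exp a := by
  rw [← exp_mul_mul_exp_neg ha, mul_assoc _ (exp (-a)), exp_neg_mul_exp_self ha, mul_one]

theorem exp_mul_eq_add_lie_mul {a b : A} (ha : IsNilpotent a) (h : ⁅a, ⁅a, b⁆⁆ = 0) :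
    exp a * b = (b + ⁅a, b⁆) * exp a := by
  rw [exp_mul_eq_exp_ad_mul ha, ← Module.End.smul_def,
    exp_smul_eq_sum (k := 2) ?_ (LieAlgebra.ad_nilpotent_of_nilpotent ha)]
  · simp [Finset.sum_range_succ]
  · simpa [pow_two] using h

theorem exp_mul_eq_add_lie_add_mul {a b c : A} (ha : IsNilpotent a) (h : ⁅a, ⁅a, b⁆⁆ = 2 • c)
    (hc : ⁅a, c⁆ = 0) : exp a * b = (b + ⁅a, b⁆ + c) * exp a := by
  rw [exp_mul_eq_exp_ad_mul ha, ← Module.End.smul_def,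
    exp_smul_eq_sum (k := 3) ?_ (LieAlgebra.ad_nilpotent_of_nilpotent ha)]
  · simp only [Finset.sum_range_succ, Finset.sum_range_zero, Module.End.smul_def, pow_zero,
      pow_one, pow_two, Module.End.mul_apply, LieAlgebra.ad_apply, h, Module.End.one_apply]
    rw [Nat.factorial_two, Nat.cast_two, ← ofNat_smul_eq_nsmul ℚ, inv_smul_smul₀ two_ne_zero]
    simp
  · rw [Module.End.smul_def, pow_succ', Module.End.mul_apply, pow_two, Module.End.mul_apply]
    simp only [LieAlgebra.ad_apply, h, lie_nsmul, hc, nsmul_zero]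

end IsNilpotent

namespace IsSl2Triple

attribute [local instance] LieRing.ofAssociativeRing

open IsNilpotent

variable {R L A : Type*} [CommRing R] [LieRing L] [LieAlgebra R L] [Ring A] [Algebra R A]
  [Algebra ℚ A]

theorem exp_mul_exp_neg_mul_exp_mul {h e f t : L} (ht : IsSl2Triple h e f) (φ : L →ₗ⁅R⁆ A)
    (he : IsNilpotent (φ e)) (hf : IsNilpotent (φ f)) {r : R}
    (hte : ⁅t, e⁆ = r • e) (htf : ⁅t, f⁆ = -(r • f)) :
    exp (φ e) * exp (-φ f) * exp (φ e) * φ t =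
      φ (t - r • h) * (exp (φ e) * exp (-φ f) * exp (φ e)) := by
  have hconj_e : exp (φ e) * φ t = φ (t - r • e) * exp (φ e) := by
    have het : ⁅e, t⁆ = -(r • e) := by rw [← lie_skew, hte]
    rw [exp_mul_eq_add_lie_mul he, ← φ.map_lie, ← map_add, het, ← sub_eq_add_neg]
    rw [← φ.map_lie, ← φ.map_lie, het, lie_neg, lie_smul, lie_self, smul_zero, neg_zero, map_zero]
  have hconj_f : exp (φ (-f)) * φ (t - r • e) = φ (t - r • e - r • h) * exp (φ (-f)) := by
    have hfte : ⁅-f, t - r • e⁆ = -(r • f) - r • h := by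
      rw [neg_lie, lie_sub, lie_smul, ← lie_skew f t, htf, ← lie_skew f e, ht.lie_e_f]
      module
    have hffte : ⁅-f, -(r • f) - r • h⁆ = 2 • (r • f) := by
      rw [neg_lie, lie_sub, lie_neg, lie_smul, lie_smul, lie_self, ← lie_skew f h,
        ht.lie_h_f_nsmul]
      module
    rw [exp_mul_eq_add_lie_add_mul (c := φ (r • f)) (map_neg φ f ▸ hf.neg), ← φ.map_lie, hfte,
      ← map_add, ← map_add]
    · congr 2; module
    · rw [← φ.map_lie, ← φ.map_lie, hfte, hffte, map_nsmul]
    · rw [← φ.map_lie, neg_lie, lie_smul, lie_self, smul_zero, neg_zero, map_zero]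
  have hconj_e' : exp (φ e) * φ (t - r • e - r • h) = φ (t - r • h) * exp (φ e) := by
    have hete : ⁅e, t - r • e - r • h⁆ = r • e := by
      rw [lie_sub, lie_sub, lie_smul, lie_smul, lie_self, ← lie_skew e t, hte, ← lie_skew e h,
        ht.lie_h_e_nsmul]
      module
    rw [exp_mul_eq_add_lie_mul he, ← φ.map_lie, hete, ← map_add]
    · congr 2; module
    · rw [← φ.map_lie, ← φ.map_lie, hete, lie_smul, lie_self, smul_zero, map_zero]
  rw [← map_neg, mul_assoc, hconj_e, ← mul_assoc, mul_assoc (exp (φ e)), hconj_f, ← mul_assoc,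
    hconj_e', mul_assoc, mul_assoc, mul_assoc]

end IsSl2Triple

theorem map_wtSpace_le {k L M : Type} [Field k] [LieRing L] [LieAlgebra k L]
    {H : LieSubalgebra k L} [AddCommGroup M] [Module k M] [LieRingModule L M] [LieModule k L M]
    {θ : Module.End k M} {τ : H →ₗ[k] H}
    (hθ : ∀ h : H, toEnd k L M h * θ = θ * toEnd k L M (τ h)) (μ : Module.Dual k H) :
    (wtSpace k L H M μ).map θ ≤ wtSpace k L H M (μ ∘ₗ τ) := by
  rintro _ ⟨v, hv, rfl⟩ h
  calc ⁅(h : L), θ v⁆ = (toEnd k L M h * θ) v := rfl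
    _ = θ ⁅((τ h : H) : L), v⁆ := by rw [hθ]; rfl
    _ = (μ ∘ₗ τ) h • θ v := by rw [hv (τ h), map_smul]; rfl

theorem multW_le_multW_comp {k L M : Type} [Field k] [LieRing L] [LieAlgebra k L]
    {H : LieSubalgebra k L} [AddCommGroup M] [Module k M] [LieRingModule L M] [LieModule k L M]
    [FiniteDimensional k M] {θ : Module.End k M} (hθ_inj : Function.Injective θ)
    {τ : H →ₗ[k] H} (hθ : ∀ h : H, toEnd k L M h * θ = θ * toEnd k L M (τ h))
    (μ : Module.Dual k H) :
    multW k L H M μ ≤ multW k L H M (μ ∘ₗ τ) :=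
  calc multW k L H M μ = Module.finrank k ((wtSpace k L H M μ).map θ) :=
        (Submodule.equivMapOfInjective θ hθ_inj _).finrank_eq
    _ ≤ multW k L H M (μ ∘ₗ τ) := Submodule.finrank_mono (map_wtSpace_le hθ μ)

open IsNilpotent in
theorem multW_le_multW_reflection [FiniteDimensional k M] {α : Weight k H L}
    (hα : α.IsNonZero) (μ : Module.Dual k H) :
    multW k L H M μ ≤
      multW k L H M (μ - μ (IsKilling.coroot α) • (α : Module.Dual k H)) := by
  obtain ⟨h₀, e, f, ht, he, hf⟩ := IsKilling.exists_isSl2Triple_of_weight_isNonZero hα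
  obtain rfl := ht.h_eq_coroot hα he hf
  set c := IsKilling.coroot α
  have hαc : (α : Module.Dual k H) c = 2 := IsKilling.root_apply_coroot hα
  set τ := Module.reflection hαc
  -- `IsNilpotent.exp` is defined over `ℚ`; `End k M` is a `ℚ`-algebra through `k`.
  let _ : Algebra ℚ (Module.End k M) :=
    ((algebraMap k _).comp (algebraMap ℚ k)).toAlgebra' fun _ _ ↦ Algebra.commutes _ _
  set φ := toEnd k L M
  have hE : IsNilpotent (φ e) := isNilpotent_toEnd_of_mem_rootSpace M H hα he
  have hF : IsNilpotent (φ f) := isNilpotent_toEnd_of_mem_rootSpace M H (neg_ne_zero.mpr hα) hf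
  set θ := exp (φ e) * exp (-φ f) * exp (φ e)
  have hθ_inj : Function.Injective θ :=
    ((Module.End.isUnit_iff θ).mp
      (((isUnit_exp hE).mul (isUnit_exp hF.neg)).mul (isUnit_exp hE))).injective
  have hθ : ∀ h : H, φ h * θ = θ * φ (τ h) := by
    intro h
    have hτe : ⁅((τ h : H) : L), e⁆ = α (τ h) • e := by
      rw [← LieSubalgebra.coe_bracket_of_module]
      exact IsKilling.lie_eq_smul_of_mem_rootSpace he (τ h)
    have hτf : ⁅((τ h : H) : L), f⁆ = -(α (τ h) • f) := by
      rw [← LieSubalgebra.coe_bracket_of_module, IsKilling.lie_eq_smul_of_mem_rootSpace hf (τ h)]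
      simp
    have hττ : ((τ h : H) : L) - α (τ h) • (c : L) = h := by
      have h_invol := congrArg Subtype.val (Module.involutive_reflection hαc h)
      rwa [Module.reflection_apply] at h_invol
    rw [ht.exp_mul_exp_neg_mul_exp_mul φ hE hF hτe hτf, hττ]
  calc multW k L H M μ ≤ multW k L H M (μ ∘ₗ τ.toLinearMap) :=
        multW_le_multW_comp hθ_inj hθ μ
    _ = multW k L H M (μ - μ c • (α : Module.Dual k H)) := by
      congr 1
      ext h
      rw [LinearMap.comp_apply, LinearEquiv.coe_coe, Module.reflection_apply, map_sub, map_smul]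
      simp only [LinearMap.sub_apply, LinearMap.smul_apply, smul_eq_mul, Weight.toLinear_apply]
      ring

theorem multW_reflection_eq [FiniteDimensional k M] {α : Weight k H L} (hα : α.IsNonZero)
    (μ : Module.Dual k H) :
    multW k L H M (μ - μ (IsKilling.coroot α) • (α : Module.Dual k H)) = multW k L H M μ := by
  refine le_antisymm ?_ (multW_le_multW_reflection k L H M hα μ)
  have hαc : (α : Module.Dual k H) (IsKilling.coroot α) = 2 := IsKilling.root_apply_coroot hα
  have h_invol : ∀ ν : Module.Dual k H,
      ν - ν (IsKilling.coroot α) • (α : Module.Dual k H) -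
        (ν - ν (IsKilling.coroot α) • (α : Module.Dual k H)) (IsKilling.coroot α) •
          (α : Module.Dual k H) = ν := by
    intro ν
    rw [LinearMap.sub_apply, LinearMap.smul_apply, hαc]
    module
  simpa only [h_invol] using
    multW_le_multW_reflection k L H M hα (μ - μ (IsKilling.coroot α) • α)

/-- the weight multiplicities of a finite-dimensional module are invariant
under the Weyl group: `mult_M(w μ) = mult_M(μ)` for all `w ∈ W` and `μ ∈ 𝔥*`. -/
theorem weight_multiplicities_weyl_invariant [FiniteDimensional k M] :
    ∀ w ∈ lieWeyl k L H, ∀ μ : Module.Dual k H,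
      multW k L H M (w μ) = multW k L H M μ := by
  intro w hw
  induction hw using Subgroup.closure_induction with
  | mem g hg =>
    obtain ⟨α, hα, hg⟩ := hg
    intro μ
    rw [hg μ]
    exact multW_reflection_eq k L H M hα μ
  | one => exact fun μ ↦ rfl
  | mul g₁ g₂ _ _ ih₁ ih₂ => exact fun μ ↦ (ih₁ (g₂ μ)).trans (ih₂ μ)
  | inv g _ ih => exact fun μ ↦ by simpa using (ih (g⁻¹ μ)).symm
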